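/- arXiv:2112.00684 — 5 statements merged into one kernel-verified Lean document; each statement's English description precedes it below -/
import Mathlib

section
/- Let P and P* be n×n real matrices satisfying P P* = P*, P* P = P*, and P* P* = P*, let α ∈ ℝ with α ≠ 1, and suppose that both I − α P and I − α P + α P* are invertible. Then (I − α P)⁻¹ = (I − α P + α P*)⁻¹ + (α/(1−α)) P*. -/
open Matrix

/-- (I − α P)⁻¹ = (I − α P + α P*)⁻¹ + (α/(1−α)) P*. -/
theorem discounted_inverse_decomposition {n : ℕ} (hn : 1 ≤ n)
    (P Ps : Matrix (Fin n) (Fin n) ℝ) (α : ℝ) (hα : α ≠ 1)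
    (h1 : P * Ps = Ps) (h2 : Ps * P = Ps) (h3 : Ps * Ps = Ps)
    (hinv₁ : IsUnit (1 - α • P).det)
    (hinv₂ : IsUnit (1 - α • P + α • Ps).det) :
    (1 - α • P)⁻¹ = (1 - α • P + α • Ps)⁻¹ + (α / (1 - α)) • Ps := by
  set B : Matrix (Fin n) (Fin n) ℝ := 1 - α • P + α • Ps with hB
  have hBPs : B * Ps = Ps := by
    simp [hB, sub_mul, add_mul, Matrix.smul_mul, h1, h3]
  have hPsB : Ps * B = Ps := by
    simp [hB, mul_sub, mul_add, Matrix.mul_smul, h2, h3]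
  have hPsBinv : Ps * B⁻¹ = Ps := by
    calc Ps * B⁻¹ = (Ps * B) * B⁻¹ := by rw [hPsB]
    _ = Ps := by rw [mul_assoc, Matrix.mul_nonsing_inv _ hinv₂, mul_one]
  have hα' : (1 - α) ≠ 0 := sub_ne_zero.mpr (Ne.symm hα)
  apply Matrix.inv_eq_right_inv
  have : (1 - α • P) = B - α • Ps := by rw [hB]; abel
  rw [this, sub_mul, mul_add, mul_add, Matrix.mul_nonsing_inv _ hinv₂,
    Matrix.smul_mul, hPsBinv, Matrix.mul_smul, hBPs, Matrix.smul_mul,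
    Matrix.mul_smul, h3, smul_smul]
  have hc : α * (α / (1 - α)) = α / (1 - α) - α := by
    field_simp; ring
  rw [hc, sub_smul]
  abel
end

section
/- Let P and P* be n×n real matrices satisfying P P* = P*, P* P = P*, and P* P* = P*, let α ∈ ℝ with α ≠ 1, and suppose that both I − α P and I − α P + α P* are invertible. Then the deviation matrix H(α) := (I − α P)⁻¹ − (1−α)⁻¹ P* satisfies H(α) = (I − α P + α P*)⁻¹ − P*. -/
open Matrix

/-! With `A = 1 - α P`, the relations `P* A = (1 - α) P*` and `(A + α P*) P* = P*` give
`(A + α P*) (A⁻¹ - (1 - α)⁻¹ P* + P*) = 1 + α (1 - α)⁻¹ P* - (1 - α)⁻¹ P* + P* = 1`,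
so `(A + α P*)⁻¹ = A⁻¹ - (1 - α)⁻¹ P* + P*`. -/

section Algebra

variable {R A : Type*} [CommRing R] [Ring A] [Algebra R A]

theorem mul_one_sub_smul_of_mul_eq_self {P Ps : A} (h : Ps * P = Ps) (α : R) :
    Ps * (1 - α • P) = (1 - α) • Ps := by
  rw [mul_sub, mul_one, mul_smul_comm, h, sub_smul, one_smul]

theorem one_sub_smul_add_smul_mul_of_mul_eq_self {P Ps : A} (hP : P * Ps = Ps)
    (hPs : Ps * Ps = Ps) (α : R) :
    (1 - α • P + α • Ps) * Ps = Ps := by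
  rw [add_mul, sub_mul, one_mul, smul_mul_assoc, smul_mul_assoc, hP, hPs, sub_add_cancel]

end Algebra

namespace Matrix

variable {m K : Type*} [Fintype m] [DecidableEq m] [Field K]

theorem mul_nonsing_inv_of_mul_eq_smul {M N : Matrix m m K} {c : K} (hc : c ≠ 0)
    (hM : IsUnit M.det) (h : N * M = c • N) :
    N * M⁻¹ = c⁻¹ • N := by
  calc N * M⁻¹ = c⁻¹ • (c • N) * M⁻¹ := by rw [smul_smul, inv_mul_cancel₀ hc, one_smul]
    _ = c⁻¹ • N := by rw [← h, smul_mul, mul_assoc, mul_nonsing_inv _ hM, mul_one]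

theorem inv_one_sub_smul_add_smul {P Ps : Matrix m m K} {α : K} (hα : α ≠ 1)
    (h1 : P * Ps = Ps) (h2 : Ps * P = Ps) (h3 : Ps * Ps = Ps)
    (hinv : IsUnit (1 - α • P).det) :
    (1 - α • P + α • Ps)⁻¹ = (1 - α • P)⁻¹ - (1 - α)⁻¹ • Ps + Ps := by
  have hα' : (1 : K) - α ≠ 0 := sub_ne_zero.mpr hα.symm
  have hPs_inv : Ps * (1 - α • P)⁻¹ = (1 - α)⁻¹ • Ps :=
    mul_nonsing_inv_of_mul_eq_smul hα' hinv (mul_one_sub_smul_of_mul_eq_self h2 α)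
  have hB : (1 - α • P + α • Ps) * Ps = Ps := one_sub_smul_add_smul_mul_of_mul_eq_self h1 h3 α
  -- a one-sided inverse of a square matrix is its inverse
  apply inv_eq_right_inv
  rw [mul_add, mul_sub, hB, Matrix.mul_smul, hB, add_mul, mul_nonsing_inv _ hinv, smul_mul,
    hPs_inv, smul_smul]
  match_scalars
  · ring
  · field_simp; ring

end Matrix

theorem deviation_matrix_formula_general {n : ℕ}
    (P Ps : Matrix (Fin n) (Fin n) ℝ) (α : ℝ) (hα : α ≠ 1)
    (h1 : P * Ps = Ps) (h2 : Ps * P = Ps) (h3 : Ps * Ps = Ps)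
    (hinv₁ : IsUnit (1 - α • P).det) :
    (1 - α • P)⁻¹ - (1 - α)⁻¹ • Ps = (1 - α • P + α • Ps)⁻¹ - Ps := by
  rw [inv_one_sub_smul_add_smul hα h1 h2 h3 hinv₁, add_sub_cancel_right]

/-- The deviation matrix H(α) = (I − α P)⁻¹ − (1−α)⁻¹ P* equals
(I − α P + α P*)⁻¹ − P*. -/
theorem deviation_matrix_formula {n : ℕ} (hn : 1 ≤ n)
    (P Ps : Matrix (Fin n) (Fin n) ℝ) (α : ℝ) (hα : α ≠ 1)
    (h1 : P * Ps = Ps) (h2 : Ps * P = Ps) (h3 : Ps * Ps = Ps)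
    (hinv₁ : IsUnit (1 - α • P).det)
    (hinv₂ : IsUnit (1 - α • P + α • Ps).det) :
    (1 - α • P)⁻¹ - (1 - α)⁻¹ • Ps = (1 - α • P + α • Ps)⁻¹ - Ps :=
  deviation_matrix_formula_general P Ps α hα h1 h2 h3 hinv₁
end

section
/- Let P be an n×n row-stochastic real matrix, let φ be a stationary distribution of P, let P* = 𝟙 φᵀ be the associated limiting matrix, let α ∈ [0,1), and suppose ∑_{k=0}^∞ α^k (P^k − P*) is considered as a series of n×n matrices. Then this series converges (HasSum), the matrix I − α P + α P* is invertible, and the sum equals (I − α P + α P*)⁻¹ − P*. -/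
open Matrix BigOperators

/-!
With `Q = 𝟙 φᵀ` we have `P Q = Q P = Q² = Q`, hence `(P - Q)^(k+1) = P^(k+1) - Q`: apart from
its term at `k = 0`, the series is the geometric series of `x = α (P - Q)`. The entries of
`(P - Q)^k` lie in `[-1, 1]` because `P^k` and `Q` are row-stochastic, so for `α < 1` the
geometric series converges entrywise, and its sum inverts `1 - x = I - α P + α P*`.
-/

lemma mul_pow_eq_self_of_mul_eq_self {M : Type*} [Monoid M] {p q : M} (hqp : q * p = q) (k : ℕ) :
    q * p ^ k = q := by
  induction k with
  | zero => rw [pow_zero, mul_one]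
  | succ k ih => rw [pow_succ, ← mul_assoc, ih, hqp]

lemma sub_pow_succ_of_absorbing {R : Type*} [Ring R] {p q : R}
    (hpq : p * q = q) (hqp : q * p = q) (hqq : q * q = q) (k : ℕ) :
    (p - q) ^ (k + 1) = p ^ (k + 1) - q := by
  induction k with
  | zero => rw [zero_add, pow_one, pow_one]
  | succ k ih =>
    rw [pow_succ', ih, pow_succ' p (k + 1), sub_mul, mul_sub, mul_sub, hpq,
      mul_pow_eq_self_of_mul_eq_self hqp, hqq]
    abel

namespace Matrix

variable {n : Type*} [Fintype n]

lemma vecMulVec_one_mul_self {R : Type*} [Semiring R] {φ : n → R} (hsum : ∑ i, φ i = 1) :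
    vecMulVec (1 : n → R) φ * vecMulVec 1 φ = vecMulVec 1 φ := by
  rw [vecMulVec_mul_vecMulVec, dotProduct_one, hsum, one_smul]

variable [DecidableEq n]

lemma vecMulVec_one_mem_rowStochastic {R : Type*} [Semiring R] [PartialOrder R] [IsOrderedRing R]
    {φ : n → R} (hφ : ∀ i, 0 ≤ φ i) (hsum : ∑ i, φ i = 1) :
    vecMulVec 1 φ ∈ rowStochastic R n :=
  mem_rowStochastic_iff_sum.2 ⟨fun i j => by simpa [vecMulVec_apply] using hφ j,
    fun i => by simpa [vecMulVec_apply] using hsum⟩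

section OrderedRing

variable {R : Type*} [Ring R] [LinearOrder R] [IsOrderedRing R] {M N : Matrix n n R}

lemma abs_sub_apply_le_one (hM : M ∈ rowStochastic R n) (hN : N ∈ rowStochastic R n) (i j : n) :
    |(M - N) i j| ≤ 1 :=
  abs_sub_le_of_nonneg_of_le (nonneg_of_mem_rowStochastic hM) (le_one_of_mem_rowStochastic hM)
    (nonneg_of_mem_rowStochastic hN) (le_one_of_mem_rowStochastic hN)

lemma abs_sub_pow_apply_le_one (hM : M ∈ rowStochastic R n) (hN : N ∈ rowStochastic R n)
    (hMN : M * N = N) (hNM : N * M = N) (hNN : N * N = N) (k : ℕ) (i j : n) :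
    |((M - N) ^ k) i j| ≤ 1 := by
  rcases k with _ | k
  · rw [pow_zero, abs_of_nonneg (nonneg_of_mem_rowStochastic (one_mem _))]
    exact le_one_of_mem_rowStochastic (one_mem _)
  · rw [sub_pow_succ_of_absorbing hMN hNM hNN]
    exact abs_sub_apply_le_one (pow_mem hM _) hN i j

end OrderedRing

lemma summable_smul_pow_of_abs_pow_apply_le_one {A : Matrix n n ℝ}
    (hA : ∀ k i j, |(A ^ k) i j| ≤ 1) {α : ℝ} (hα₀ : 0 ≤ α) (hα₁ : α < 1) :
    Summable fun k : ℕ => (α • A) ^ k := by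
  refine Pi.summable.2 fun i => Pi.summable.2 fun j => ?_
  refine (summable_geometric_of_lt_one hα₀ hα₁).of_norm_bounded fun k => ?_
  simp only [smul_pow, smul_apply, smul_eq_mul, norm_mul, norm_pow, Real.norm_eq_abs,
    abs_of_nonneg hα₀]
  exact mul_le_of_le_one_right (pow_nonneg hα₀ k) (hA k i j)

end Matrix

theorem deviation_series_hasSum_general {n : ℕ}
    (P : Matrix (Fin n) (Fin n) ℝ) (φ : Fin n → ℝ) (α : ℝ)
    (hα : α ∈ Set.Ico (0 : ℝ) 1)
    (hPpos : ∀ i j, 0 ≤ P i j) (hProw : ∀ i, ∑ j, P i j = 1)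
    (hφpos : ∀ i, 0 ≤ φ i) (hφsum : ∑ i, φ i = 1) (hφstat : φ ᵥ* P = φ) :
    IsUnit (1 - α • P + α • vecMulVec 1 φ).det ∧
    HasSum (fun k : ℕ => α ^ k • (P ^ k - vecMulVec 1 φ))
      ((1 - α • P + α • vecMulVec 1 φ)⁻¹ - vecMulVec 1 φ) := by
  set Q := vecMulVec 1 φ
  have hP : P ∈ rowStochastic ℝ (Fin n) := mem_rowStochastic_iff_sum.2 ⟨hPpos, hProw⟩
  have hPQ : P * Q = Q := by rw [mul_vecMulVec, one_vecMul_of_mem_rowStochastic hP]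
  have hQP : Q * P = Q := by rw [vecMulVec_mul, hφstat]
  have hQQ : Q * Q = Q := vecMulVec_one_mul_self hφsum
  have hsum : Summable fun k : ℕ => (α • (P - Q)) ^ k :=
    summable_smul_pow_of_abs_pow_apply_le_one
      (abs_sub_pow_apply_le_one hP (vecMulVec_one_mem_rowStochastic hφpos hφsum) hPQ hQP hQQ)
      hα.1 hα.2
  have hgeom := hsum.tsum_pow_mul_one_sub
  rw [show 1 - α • P + α • Q = 1 - α • (P - Q) by rw [smul_sub]; abel, inv_eq_left_inv hgeom]
  refine ⟨isUnit_det_of_left_inverse hgeom, ?_⟩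
  have hseries : (fun k : ℕ => α ^ k • (P ^ k - Q)) =
      Function.update (fun k => (α • (P - Q)) ^ k) 0 (1 - Q) := by
    funext k
    rcases k with _ | k
    · simp
    · rw [Function.update_of_ne k.succ_ne_zero, smul_pow, sub_pow_succ_of_absorbing hPQ hQP hQQ]
  rw [hseries]
  have h := hsum.hasSum.update 0 (1 - Q)
  rwa [pow_zero, sub_sub_cancel_left, neg_add_eq_sub] at h

/-- For row-stochastic P with stationary distribution φ and
limiting matrix P* = 𝟙 φᵀ and α ∈ [0,1), the series ∑ₖ αᵏ (Pᵏ − P*)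
converges, I − α P + α P* is invertible, and the sum equals
(I − α P + α P*)⁻¹ − P*. -/
theorem deviation_series_hasSum {n : ℕ} (hn : 1 ≤ n)
    (P : Matrix (Fin n) (Fin n) ℝ) (φ : Fin n → ℝ) (α : ℝ)
    (hα : α ∈ Set.Ico (0 : ℝ) 1)
    (hPpos : ∀ i j, 0 ≤ P i j) (hProw : ∀ i, ∑ j, P i j = 1)
    (hφpos : ∀ i, 0 ≤ φ i) (hφsum : ∑ i, φ i = 1) (hφstat : φ ᵥ* P = φ) :
    IsUnit (1 - α • P + α • vecMulVec 1 φ).det ∧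
    HasSum (fun k : ℕ => α ^ k • (P ^ k - vecMulVec 1 φ))
      ((1 - α • P + α • vecMulVec 1 φ)⁻¹ - vecMulVec 1 φ) :=
  deviation_series_hasSum_general P φ α hα hPpos hProw hφpos hφsum hφstat
end

section
/- Let α ∈ (0,1). For i = 1, 2 let Pᵢ be an n×n row-stochastic real matrix with stationary distribution φᵢ and limiting matrix Pᵢ* = 𝟙 φᵢᵀ, let Cᵢ ∈ ℝⁿ be a cost vector, and suppose I − α Pᵢ and I − α Pᵢ + α Pᵢ* are invertible. Define ηᵢ = φᵢᵀ Cᵢ and ηᵢ^α = φᵢᵀ ((I − α Pᵢ)⁻¹ Cᵢ). Then η₁^α < η₂^α if and only if η₁ < η₂, and η₁^α = η₂^α if and only if η₁ = η₂. -/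
/-!
A stationary distribution is a left eigenvector of `I - αP` with eigenvalue `1 - α`, hence of
`(I - αP)⁻¹` with eigenvalue `(1 - α)⁻¹`. So `η^α = φᵀ (I - αP)⁻¹ C = η / (1 - α)`, and both
systems' discounted performances are the average-cost ones scaled by the same positive factor.
-/

open Matrix

section

variable {ι K : Type*} [Fintype ι] [DecidableEq ι] [Field K]

lemma vecMul_nonsing_inv_of_vecMul_eq_smul {A : Matrix ι ι K} {φ : ι → K} {c : K}
    (h : φ ᵥ* A = c • φ) (hA : IsUnit A.det) : φ ᵥ* A⁻¹ = c⁻¹ • φ := by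
  have hφ : φ = c • (φ ᵥ* A⁻¹) := by
    rw [← smul_vecMul, ← h, vecMul_vecMul, mul_nonsing_inv _ hA, vecMul_one]
  rcases eq_or_ne c 0 with rfl | hc
  · rw [zero_smul] at hφ
    rw [hφ, zero_vecMul, smul_zero]
  · rw [hφ, smul_smul, inv_mul_cancel₀ hc, one_smul, ← hφ]

lemma vecMul_one_sub_smul_of_vecMul_eq {P : Matrix ι ι K} {φ : ι → K} (α : K)
    (h : φ ᵥ* P = φ) : φ ᵥ* (1 - α • P) = (1 - α) • φ := by
  rw [vecMul_sub, vecMul_one, vecMul_smul, h, sub_smul, one_smul]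

lemma dotProduct_inv_one_sub_smul_mulVec_of_vecMul_eq {P : Matrix ι ι K} {φ : ι → K} (α : K)
    (h : φ ᵥ* P = φ) (hinv : IsUnit (1 - α • P).det) (C : ι → K) :
    φ ⬝ᵥ ((1 - α • P)⁻¹ *ᵥ C) = (1 - α)⁻¹ * (φ ⬝ᵥ C) := by
  rw [dotProduct_mulVec,
    vecMul_nonsing_inv_of_vecMul_eq_smul (vecMul_one_sub_smul_of_vecMul_eq α h) hinv,
    smul_dotProduct, smul_eq_mul]

end

theorem comparison_lemma_general {n : ℕ} (α : ℝ) (hα : α ∈ Set.Ioo (0 : ℝ) 1)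
    (P₁ P₂ : Matrix (Fin n) (Fin n) ℝ) (φ₁ φ₂ C₁ C₂ : Fin n → ℝ)
    (hφ₁stat : φ₁ ᵥ* P₁ = φ₁)
    (hφ₂stat : φ₂ ᵥ* P₂ = φ₂)
    (hinv₁ : IsUnit (1 - α • P₁).det)
    (hinv₂ : IsUnit (1 - α • P₂).det) :
    (φ₁ ⬝ᵥ ((1 - α • P₁)⁻¹ *ᵥ C₁) < φ₂ ⬝ᵥ ((1 - α • P₂)⁻¹ *ᵥ C₂) ↔
      φ₁ ⬝ᵥ C₁ < φ₂ ⬝ᵥ C₂) ∧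
    (φ₁ ⬝ᵥ ((1 - α • P₁)⁻¹ *ᵥ C₁) = φ₂ ⬝ᵥ ((1 - α • P₂)⁻¹ *ᵥ C₂) ↔
      φ₁ ⬝ᵥ C₁ = φ₂ ⬝ᵥ C₂) := by
  have hscale : 0 < (1 - α)⁻¹ := inv_pos.mpr (sub_pos.mpr hα.2)
  rw [dotProduct_inv_one_sub_smul_mulVec_of_vecMul_eq α hφ₁stat hinv₁,
    dotProduct_inv_one_sub_smul_mulVec_of_vecMul_eq α hφ₂stat hinv₂]
  exact ⟨mul_lt_mul_iff_of_pos_left hscale, mul_right_inj' hscale.ne'⟩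

/-- Comparison lemma: ranking of stationary discounted
system-based performances matches the ranking of the average-cost ones. -/
theorem comparison_lemma {n : ℕ} (hn : 1 ≤ n) (α : ℝ) (hα : α ∈ Set.Ioo (0 : ℝ) 1)
    (P₁ P₂ : Matrix (Fin n) (Fin n) ℝ) (φ₁ φ₂ C₁ C₂ : Fin n → ℝ)
    (hP₁pos : ∀ i j, 0 ≤ P₁ i j) (hP₁row : ∀ i, ∑ j, P₁ i j = 1)
    (hP₂pos : ∀ i j, 0 ≤ P₂ i j) (hP₂row : ∀ i, ∑ j, P₂ i j = 1)
    (hφ₁pos : ∀ i, 0 ≤ φ₁ i) (hφ₁sum : ∑ i, φ₁ i = 1) (hφ₁stat : φ₁ ᵥ* P₁ = φ₁)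
    (hφ₂pos : ∀ i, 0 ≤ φ₂ i) (hφ₂sum : ∑ i, φ₂ i = 1) (hφ₂stat : φ₂ ᵥ* P₂ = φ₂)
    (hinv₁ : IsUnit (1 - α • P₁).det)
    (hinv₁' : IsUnit (1 - α • P₁ + α • vecMulVec 1 φ₁).det)
    (hinv₂ : IsUnit (1 - α • P₂).det)
    (hinv₂' : IsUnit (1 - α • P₂ + α • vecMulVec 1 φ₂).det) :
    (φ₁ ⬝ᵥ ((1 - α • P₁)⁻¹ *ᵥ C₁) < φ₂ ⬝ᵥ ((1 - α • P₂)⁻¹ *ᵥ C₂) ↔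
      φ₁ ⬝ᵥ C₁ < φ₂ ⬝ᵥ C₂) ∧
    (φ₁ ⬝ᵥ ((1 - α • P₁)⁻¹ *ᵥ C₁) = φ₂ ⬝ᵥ ((1 - α • P₂)⁻¹ *ᵥ C₂) ↔
      φ₁ ⬝ᵥ C₁ = φ₂ ⬝ᵥ C₂) :=
  comparison_lemma_general α hα P₁ P₂ φ₁ φ₂ C₁ C₂ hφ₁stat hφ₂stat hinv₁ hinv₂
end

section
/- Let P be an n×n row-stochastic real matrix, let φ be a stationary distribution of P, let P* = 𝟙 φᵀ be the associated limiting matrix, and suppose I − P + P* is invertible. Then the deviation matrix H(α) = (I − α P)⁻¹ − (1 − α)⁻¹ P* tends, as α tends to 1 from below (along discount factors α ∈ [0,1)), to the Drazin-inverse matrix H = (I − P + P*)⁻¹ − P*, which is the zeroth-order coefficient of the truncated Laurent series expansion of the discounted value operator. -/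
/-!
Since `P* = 𝟙 φᵀ` is idempotent and `P P* = P* P = P*`, the matrix `A(α) = I − α P + α P*`
satisfies `P* A(α) = P*`, and `(I − α P)⁻¹ = A(α)⁻¹ + α (1 − α)⁻¹ P*`. Hence
`H(α) = A(α)⁻¹ − P*`, which is continuous at `α = 1` because `A(1) = I − P + P*` is invertible.
-/

open Matrix Filter Topology

namespace Matrix

variable {ι 𝕜 : Type*} [Fintype ι] [DecidableEq ι]

theorem inv_one_sub_smul_sub_smul_eq [Field 𝕜] {P Q : Matrix ι ι 𝕜}
    (hPQ : P * Q = Q) (hQP : Q * P = Q) (hQQ : Q * Q = Q) {α : 𝕜} (hα : α ≠ 1)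
    (hA : IsUnit (1 - α • P + α • Q).det) :
    (1 - α • P)⁻¹ - (1 - α)⁻¹ • Q = (1 - α • P + α • Q)⁻¹ - Q := by
  set A := 1 - α • P + α • Q with hA_def
  have hQA : Q * A = Q := by
    simp only [hA_def, Matrix.mul_add, Matrix.mul_sub, Matrix.mul_one, Matrix.mul_smul, hQP, hQQ]
    abel
  have hQAinv : Q * A⁻¹ = Q := by
    nth_rw 1 [← hQA]
    exact Matrix.mul_nonsing_inv_cancel_right A Q hA
  have hA_inv : (1 - α • P) * A⁻¹ = 1 - α • Q := by
    rw [show 1 - α • P = A - α • Q by simp [hA_def], Matrix.sub_mul, Matrix.smul_mul, hQAinv,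
      Matrix.mul_nonsing_inv A hA]
  have hQ : (1 - α • P) * Q = (1 - α) • Q := by
    rw [Matrix.sub_mul, Matrix.smul_mul, hPQ, Matrix.one_mul, sub_smul, one_smul]
  have hright : (1 - α • P) * (A⁻¹ - Q + (1 - α)⁻¹ • Q) = 1 := by
    rw [Matrix.mul_add, Matrix.mul_sub, Matrix.mul_smul, hA_inv, hQ, smul_smul,
      inv_mul_cancel₀ (sub_ne_zero.mpr hα.symm), one_smul]
    module
  rw [inv_eq_right_inv hright, add_sub_cancel_right]

variable [NormedField 𝕜] {P Q : Matrix ι ι 𝕜}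

theorem continuousAt_inv_one_sub_smul_add_smul {α₀ : 𝕜}
    (h : IsUnit (1 - α₀ • P + α₀ • Q).det) :
    ContinuousAt (fun α : 𝕜 => (1 - α • P + α • Q)⁻¹) α₀ := by
  refine ContinuousAt.comp (g := Inv.inv) ?_ (by fun_prop)
  refine continuousAt_matrix_inv _ ?_
  rw [Ring.inverse_eq_inv']
  exact continuousAt_inv₀ h.ne_zero

theorem tendsto_inv_one_sub_smul_sub_smul (hPQ : P * Q = Q) (hQP : Q * P = Q) (hQQ : Q * Q = Q)
    (h : IsUnit (1 - P + Q).det) :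
    Tendsto (fun α : 𝕜 => (1 - α • P)⁻¹ - (1 - α)⁻¹ • Q) (𝓝[≠] 1)
      (𝓝 ((1 - P + Q)⁻¹ - Q)) := by
  have h₁ : IsUnit (1 - (1 : 𝕜) • P + (1 : 𝕜) • Q).det := by simpa using h
  have hdet : ∀ᶠ α : 𝕜 in 𝓝 1, (1 - α • P + α • Q).det ≠ 0 :=
    ContinuousAt.eventually_ne (by fun_prop) h₁.ne_zero
  have hlim : Tendsto (fun α : 𝕜 => (1 - α • P + α • Q)⁻¹ - Q) (𝓝[≠] 1)
      (𝓝 ((1 - P + Q)⁻¹ - Q)) := by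
    simpa using ((continuousAt_inv_one_sub_smul_add_smul h₁).tendsto.mono_left
      nhdsWithin_le_nhds).sub_const Q
  refine hlim.congr' ?_
  filter_upwards [eventually_nhdsWithin_of_eventually_nhds hdet, self_mem_nhdsWithin]
    with α hα hα1
  exact (inv_one_sub_smul_sub_smul_eq hPQ hQP hQQ hα1 hα.isUnit).symm

end Matrix

theorem deviation_matrix_limit_general {n : ℕ}
    (P : Matrix (Fin n) (Fin n) ℝ) (φ : Fin n → ℝ)
    (hProw : ∀ i, ∑ j, P i j = 1)
    (hφsum : ∑ i, φ i = 1) (hφstat : φ ᵥ* P = φ)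
    (hinv : IsUnit (1 - P + vecMulVec 1 φ).det) :
    Tendsto (fun α : ℝ => (1 - α • P)⁻¹ - (1 - α)⁻¹ • vecMulVec 1 φ)
      (nhdsWithin 1 (Set.Ico (0 : ℝ) 1))
      (nhds ((1 - P + vecMulVec 1 φ)⁻¹ - vecMulVec 1 φ)) := by
  have hP_one : P *ᵥ 1 = 1 := funext fun i => by simp [mulVec, dotProduct_one, hProw]
  set Q : Matrix (Fin n) (Fin n) ℝ := vecMulVec 1 φ
  have hPQ : P * Q = Q := by rw [mul_vecMulVec, hP_one]
  have hQP : Q * P = Q := by rw [vecMulVec_mul, hφstat]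
  have hQQ : Q * Q = Q := by rw [vecMulVec_mul_vecMulVec, dotProduct_one, hφsum, one_smul]
  exact (tendsto_inv_one_sub_smul_sub_smul hPQ hQP hQQ hinv).mono_left
    (nhdsWithin_mono _ fun α hα => hα.2.ne)

/-- The deviation matrix H(α) = (I − α P)⁻¹ − (1 − α)⁻¹ P* tends,
as α → 1⁻ along α ∈ [0,1), to the Drazin inverse H = (I − P + P*)⁻¹ − P*. -/
theorem deviation_matrix_limit {n : ℕ} (hn : 1 ≤ n)
    (P : Matrix (Fin n) (Fin n) ℝ) (φ : Fin n → ℝ)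
    (hPpos : ∀ i j, 0 ≤ P i j) (hProw : ∀ i, ∑ j, P i j = 1)
    (hφpos : ∀ i, 0 ≤ φ i) (hφsum : ∑ i, φ i = 1) (hφstat : φ ᵥ* P = φ)
    (hinv : IsUnit (1 - P + vecMulVec 1 φ).det) :
    Tendsto (fun α : ℝ => (1 - α • P)⁻¹ - (1 - α)⁻¹ • vecMulVec 1 φ)
      (nhdsWithin 1 (Set.Ico (0 : ℝ) 1))
      (nhds ((1 - P + vecMulVec 1 φ)⁻¹ - vecMulVec 1 φ)) :=
  deviation_matrix_limit_general P φ hProw hφsum hφstat hinv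
end
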